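/- Let χ ∈ X_fin (finite Kharchenko root system). Then dim U^-(χ) < ∞ if and only if for every χ' ∼ χ (i.e. χ' obtained from χ by a finite sequence of Lusztig twists i★) and for every i ∈ I, χ'(α_i, α_i) is a root of unity. -/

import Mathlib

/-- `ℤΠ`, the free `ℤ`-module with basis `Π = {α_1,…,α_N}`. -/
abbrev Mz (N : ℕ) := Fin N →₀ ℤ

/-- The simple "root" `α_i`, the `i`-th basis element of `ℤΠ`. -/
noncomputable def alphav {N : ℕ} (i : Fin N) : Mz N := Finsupp.single i 1

/-- A bi-homomorphism `χ : ℤΠ × ℤΠ → ℂ*`. -/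
def IsBihom {N : ℕ} (χ : Mz N → Mz N → ℂˣ) : Prop :=
  (∀ a b c : Mz N, χ a (b + c) = χ a b * χ a c) ∧
  (∀ a b c : Mz N, χ (a + b) c = χ a c * χ b c)

/-- `(m)_t := 1 + t + ⋯ + t^{m-1}`. -/
noncomputable def qnum (m : ℕ) (t : ℂ) : ℂ := ∑ j ∈ Finset.range m, t ^ j

/-- `(m)_t! := ∏_{j=1}^m (j)_t`. -/
noncomputable def qfact (m : ℕ) (t : ℂ) : ℂ := ∏ j ∈ Finset.range m, qnum (j + 1) t

/-- `(m; t₁, t₂)! := ∏_{j=1}^m (1 - t₁^{j-1} t₂)`. -/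
noncomputable def tfact (m : ℕ) (t₁ t₂ : ℂ) : ℂ := ∏ j ∈ Finset.range m, (1 - t₁ ^ j * t₂)

/-- The Cartan entry `c` (off-diagonal part) attached to `q = q_{ii}` and `r = q_{ij}q_{ji}`:
`⊥` (i.e. `-∞`) if `(m)_q!(m;q,r)! ≠ 0` for all `m`, and otherwise
`-Max{m ∈ ℤ≥0 | (m)_q!(m;q,r)! ≠ 0}`. -/
noncomputable def cEntry (q r : ℂ) : WithBot ℤ :=
  letI := Classical.propDecidable
  if ∀ m : ℕ, qfact m q * tfact m q r ≠ 0 then ⊥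
  else ((-((sSup {m : ℕ | qfact m q * tfact m q r ≠ 0} : ℕ) : ℤ) : ℤ) : WithBot ℤ)

/-- The generalized Cartan matrix `c^χ_{ij}` of a bi-homomorphism `χ`. -/
noncomputable def cMat {N : ℕ} (χ : Mz N → Mz N → ℂˣ) (i j : Fin N) : WithBot ℤ :=
  if i = j then 2
  else cEntry (χ (alphav i) (alphav i))
    ((χ (alphav i) (alphav j) : ℂ) * (χ (alphav j) (alphav i) : ℂ))

/-- `c^χ_{ij}` as an integer (junk value `0` in the `-∞` case). -/
noncomputable def cInt {N : ℕ} (χ : Mz N → Mz N → ℂˣ) (i j : Fin N) : ℤ :=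
  (cMat χ i j).unbotD 0

/-- The reflection `s^χ_i ∈ Aut_ℤ(ℤΠ)`, `s^χ_i(α_j) = α_j - c^χ_{ij} α_i`,
extended `ℤ`-linearly. -/
noncomputable def sMap {N : ℕ} (χ : Mz N → Mz N → ℂˣ) (i : Fin N) (v : Mz N) : Mz N :=
  v - (v.sum fun j n => n * cInt χ i j) • alphav i

/-- The Lusztig twist `i★χ`, `(i★χ)(α,β) := χ(s^χ_i α, s^χ_i β)`. -/
noncomputable def starB {N : ℕ} (i : Fin N) (χ : Mz N → Mz N → ℂˣ) :
    Mz N → Mz N → ℂˣ :=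
  fun a b => χ (sMap χ i a) (sMap χ i b)

/-- χ' is obtained from χ by a finite sequence of Lusztig twists (χ' ∼ χ). -/
def Reachable {N : ℕ} (χ χ' : Mz N → Mz N → ℂˣ) : Prop :=
  ∃ l : List (Fin N), χ' = l.foldl (fun ψ i => starB i ψ) χ

/-- The iterated twists χ_{f,t}: χ_{f,0} = χ and χ_{f,t} = f(t)★χ_{f,t-1}. -/
noncomputable def chif {N : ℕ} (χ : Mz N → Mz N → ℂˣ) (f : ℕ → Fin N) :
    ℕ → (Mz N → Mz N → ℂˣ)
  | 0 => χ
  | (t + 1) => starB (f (t + 1)) (chif χ f t)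

/-- The partial products w_t = s^{χ_{f,1}}_{f(1)} ∘ ⋯ ∘ s^{χ_{f,t}}_{f(t)}. -/
noncomputable def wt {N : ℕ} (χ : Mz N → Mz N → ℂˣ) (f : ℕ → Fin N) :
    ℕ → (Mz N → Mz N)
  | 0 => id
  | (t + 1) => wt χ f t ∘ sMap (chif χ f (t + 1)) (f (t + 1))

/-- The nonzero elements of ℤ≥0 Π. -/
def PosCone (N : ℕ) : Set (Mz N) := {v | v ≠ 0 ∧ ∀ k, 0 ≤ v k}

/-- The elements of -ℤ≥0 Π. -/
def NegCone (N : ℕ) : Set (Mz N) := {v | ∀ k, v k ≤ 0}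

/-- The height h^χ(α) of a root: ⊤ if (m)_{χ(α,α)}! ≠ 0 for all m, and otherwise
Max{m : (m)_{χ(α,α)}! ≠ 0}. -/
noncomputable def hbound (q : ℂ) : ℕ∞ :=
  letI := Classical.propDecidable
  if ∀ m : ℕ, qfact m q ≠ 0 then ⊤
  else ((sSup {m : ℕ | qfact m q ≠ 0} : ℕ) : ℕ∞)

/-!
Both directions rest on one fact: the values `χ(β, β)` for `β ∈ R⁺(χ)` are exactly the values
`ψ(α_i, α_i)` for `ψ ∼ χ`. A twist `i★ψ` permutes `R⁺ ∖ {α_i}` through `s_i` and keeps the value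
at `α_i` (as `s_i α_i = -α_i`), so every `ψ(α_i, α_i)` is some `χ(γ, γ)`. Conversely, pull a
positive root `β` back along the longest word: `w_t⁻¹ β` must reach the simple root `α_{f(t+1)}`
for some `t`, since otherwise it stays positive up to `t = n`, while `w_n` sends positive
vectors to negative ones; then `χ(β, β) = χ_{f,t}(α_{f(t+1)}, α_{f(t+1)})`. Finally the PBW index
set is finite iff every height `h^χ(β)` is finite, i.e. iff every `χ(β, β)`, which is `≠ 1`, is
a root of unity.
-/

section Reflection

variable {N : ℕ}

lemma cInt_self (χ : Mz N → Mz N → ℂˣ) (i : Fin N) : cInt χ i i = 2 := by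
  simp [cInt, cMat]

lemma sMap_eq (χ : Mz N → Mz N → ℂˣ) (i : Fin N) (v : Mz N) :
    sMap χ i v = v - Finsupp.linearCombination ℤ (cInt χ i) v • alphav i := by
  simp [sMap, Finsupp.linearCombination_apply]

lemma sMap_add (χ : Mz N → Mz N → ℂˣ) (i : Fin N) (a b : Mz N) :
    sMap χ i (a + b) = sMap χ i a + sMap χ i b := by
  simp only [sMap_eq, map_add, add_smul]
  abel

lemma linearCombination_cInt_alphav_self (χ : Mz N → Mz N → ℂˣ) (i : Fin N) :
    Finsupp.linearCombination ℤ (cInt χ i) (alphav i) = 2 := by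
  simp [alphav, Finsupp.linearCombination_single, cInt_self]

lemma sMap_alphav_self (χ : Mz N → Mz N → ℂˣ) (i : Fin N) :
    sMap χ i (alphav i) = -alphav i := by
  rw [sMap_eq, linearCombination_cInt_alphav_self, two_smul]
  abel

lemma sMap_sMap (χ : Mz N → Mz N → ℂˣ) (i : Fin N) (v : Mz N) :
    sMap χ i (sMap χ i v) = v := by
  rw [sMap_eq _ _ (sMap χ i v), sMap_eq, map_sub, map_zsmul,
    linearCombination_cInt_alphav_self, smul_eq_mul, sub_smul, mul_two, add_smul]
  abel

end Reflection

section Bihom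

variable {N : ℕ} {χ : Mz N → Mz N → ℂˣ}

lemma isBihom_starB (hχ : IsBihom χ) (i : Fin N) : IsBihom (starB i χ) :=
  ⟨fun a b c => by simp only [starB, sMap_add, hχ.1],
    fun a b c => by simp only [starB, sMap_add, hχ.2]⟩

lemma IsBihom.apply_neg_neg (hχ : IsBihom χ) (a b : Mz N) : χ (-a) (-b) = χ a b := by
  let right : Multiplicative (Mz N) →* ℂˣ :=
    MonoidHom.mk' (fun y => χ (-a) y.toAdd) fun _ _ => hχ.1 _ _ _
  let left : Multiplicative (Mz N) →* ℂˣ :=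
    MonoidHom.mk' (fun x => χ x.toAdd b) fun _ _ => hχ.2 _ _ _
  calc χ (-a) (-b) = (χ (-a) b)⁻¹ := map_inv right (Multiplicative.ofAdd b)
    _ = χ a b := by rw [show χ (-a) b = (χ a b)⁻¹ from map_inv left (Multiplicative.ofAdd a),
      inv_inv]

lemma starB_apply_alphav_self (hχ : IsBihom χ) (i : Fin N) :
    starB i χ (alphav i) (alphav i) = χ (alphav i) (alphav i) := by
  rw [starB, sMap_alphav_self, hχ.apply_neg_neg]

end Bihom

section Reachability

variable {N : ℕ} {χ : Mz N → Mz N → ℂˣ}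

lemma Reachable.refl (χ : Mz N → Mz N → ℂˣ) : Reachable χ χ := ⟨[], rfl⟩

lemma Reachable.starB_right {ψ : Mz N → Mz N → ℂˣ} (h : Reachable χ ψ) (i : Fin N) :
    Reachable χ (starB i ψ) := by
  obtain ⟨l, rfl⟩ := h
  exact ⟨l ++ [i], by rw [List.foldl_append]; rfl⟩

@[elab_as_elim]
lemma Reachable.induction {motive : (Mz N → Mz N → ℂˣ) → Prop} (refl : motive χ)
    (starB_right : ∀ ψ i, Reachable χ ψ → motive ψ → motive (starB i ψ))
    {ψ : Mz N → Mz N → ℂˣ} (h : Reachable χ ψ) : motive ψ := by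
  obtain ⟨l, rfl⟩ := h
  induction l using List.reverseRecOn with
  | nil => exact refl
  | append_singleton l i ih =>
    rw [List.foldl_append]
    exact starB_right _ i ⟨l, rfl⟩ ih

lemma Reachable.isBihom (hχ : IsBihom χ) {ψ : Mz N → Mz N → ℂˣ} (h : Reachable χ ψ) :
    IsBihom ψ :=
  h.induction hχ fun _ i _ hψ => isBihom_starB hψ i

lemma chif_reachable (χ : Mz N → Mz N → ℂˣ) (f : ℕ → Fin N) (t : ℕ) :
    Reachable χ (chif χ f t) := by
  induction t with
  | zero => exact Reachable.refl χ
  | succ t ih => exact ih.starB_right (f (t + 1))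

end Reachability

section RootValues

variable {N : ℕ}

lemma exists_mem_apply_self_eq_of_mem_starB {ψ : Mz N → Mz N → ℂˣ} (hψ : IsBihom ψ)
    {i : Fin N} {R R' : Set (Mz N)} (hi : alphav i ∈ R)
    (hR : sMap ψ i '' (R \ {alphav i}) = R' \ {alphav i}) {β : Mz N} (hβ : β ∈ R') :
    ∃ γ ∈ R, starB i ψ β β = ψ γ γ := by
  by_cases hβi : β = alphav i
  · exact ⟨alphav i, hi, hβi ▸ starB_apply_alphav_self hψ i⟩
  · obtain ⟨γ, hγ, rfl⟩ : β ∈ sMap ψ i '' (R \ {alphav i}) := hR ▸ ⟨hβ, hβi⟩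
    exact ⟨γ, hγ.1, by rw [starB, sMap_sMap]⟩

lemma Reachable.exists_mem_apply_self_eq {χ ψ : Mz N → Mz N → ℂˣ} (hχ : IsBihom χ)
    {Rp : (Mz N → Mz N → ℂˣ) → Set (Mz N)}
    (hRsimple : ∀ ψ, Reachable χ ψ → ∀ i : Fin N, alphav i ∈ Rp ψ)
    (hRrefl : ∀ ψ, Reachable χ ψ → ∀ i : Fin N,
      sMap ψ i '' (Rp ψ \ {alphav i}) = Rp (starB i ψ) \ {alphav i})
    (h : Reachable χ ψ) : ∀ β ∈ Rp ψ, ∃ γ ∈ Rp χ, ψ β β = χ γ γ := by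
  refine h.induction (fun β hβ => ⟨β, hβ, rfl⟩) fun ψ i hψ ih β hβ => ?_
  obtain ⟨γ, hγ, hβγ⟩ := exists_mem_apply_self_eq_of_mem_starB (hψ.isBihom hχ)
    (hRsimple ψ hψ i) (hRrefl ψ hψ i) hβ
  exact hβγ ▸ ih γ hγ

end RootValues

section ReducedWord

variable {N : ℕ} (χ : Mz N → Mz N → ℂˣ) (f : ℕ → Fin N)

noncomputable def wtInv : ℕ → Mz N → Mz N
  | 0 => id
  | t + 1 => sMap (chif χ f t) (f (t + 1)) ∘ wtInv t

lemma sMap_chif_succ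
    (hstar : ∀ ψ, Reachable χ ψ → ∀ i : Fin N,
      starB i (starB i ψ) = ψ ∧ sMap (starB i ψ) i = sMap ψ i) (t : ℕ) :
    sMap (chif χ f (t + 1)) (f (t + 1)) = sMap (chif χ f t) (f (t + 1)) :=
  (hstar _ (chif_reachable χ f t) _).2

variable {χ f}

lemma wt_wtInv (hs : ∀ t, sMap (chif χ f (t + 1)) (f (t + 1)) = sMap (chif χ f t) (f (t + 1)))
    (t : ℕ) (β : Mz N) : wt χ f t (wtInv χ f t β) = β := by
  induction t with
  | zero => rfl
  | succ t ih => simp only [wt, wtInv, Function.comp_apply, hs t, sMap_sMap, ih]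

lemma apply_wt_wt (hs : ∀ t, sMap (chif χ f (t + 1)) (f (t + 1)) = sMap (chif χ f t) (f (t + 1)))
    (t : ℕ) (a b : Mz N) : χ (wt χ f t a) (wt χ f t b) = chif χ f t a b := by
  induction t generalizing a b with
  | zero => rfl
  | succ t ih =>
    simp only [wt, Function.comp_apply, ih, hs t]
    rfl

lemma wt_add (t : ℕ) (a b : Mz N) : wt χ f t (a + b) = wt χ f t a + wt χ f t b := by
  induction t generalizing a b with
  | zero => rfl
  | succ t ih => simp only [wt, Function.comp_apply, sMap_add, ih]

lemma AddMonoidHom.apply_nonpos_of_nonneg (W : Mz N →+ Mz N)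
    (hW : ∀ j k, W (alphav j) k ≤ 0) {v : Mz N} (hv : ∀ k, 0 ≤ v k) (k : Fin N) :
    W v k ≤ 0 := by
  have hsum : W v = v.sum fun j m => m • W (alphav j) := by
    conv_lhs => rw [← Finsupp.sum_single v]
    rw [map_finsuppSum]
    refine Finsupp.sum_congr fun j _ => ?_
    rw [← map_zsmul, alphav, Finsupp.smul_single_one]
  rw [hsum, Finsupp.sum, Finsupp.finsetSum_apply]
  exact Finset.sum_nonpos fun j _ => by
    simpa only [Finsupp.smul_apply, smul_eq_mul] using
      mul_nonpos_of_nonneg_of_nonpos (hv j) (hW j k)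

lemma wt_apply_nonpos {n : ℕ}
    (hlong : wt χ f n '' Set.range (alphav (N := N)) =
      (fun v : Mz N => -v) '' Set.range (alphav (N := N)))
    {v : Mz N} (hv : ∀ k, 0 ≤ v k) (k : Fin N) : wt χ f n v k ≤ 0 := by
  refine (AddMonoidHom.mk' (wt χ f n) (wt_add n)).apply_nonpos_of_nonneg ?_ hv k
  intro j k
  obtain ⟨_, ⟨j', rfl⟩, hj'⟩ : wt χ f n (alphav j) ∈ (fun v : Mz N => -v) '' Set.range alphav :=
    hlong ▸ Set.mem_image_of_mem _ ⟨j, rfl⟩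
  rw [AddMonoidHom.mk'_apply, ← hj', Finsupp.neg_apply, alphav, Finsupp.single_apply]
  split_ifs <;> norm_num

lemma exists_reachable_apply_self_eq_of_mem {Rp : (Mz N → Mz N → ℂˣ) → Set (Mz N)}
    (hRsub : ∀ ψ, Reachable χ ψ → Rp ψ ⊆ PosCone N)
    (hRrefl : ∀ ψ, Reachable χ ψ → ∀ i : Fin N,
      sMap ψ i '' (Rp ψ \ {alphav i}) = Rp (starB i ψ) \ {alphav i})
    (hs : ∀ t, sMap (chif χ f (t + 1)) (f (t + 1)) = sMap (chif χ f t) (f (t + 1)))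
    {n : ℕ} (hlong : wt χ f n '' Set.range (alphav (N := N)) =
      (fun v : Mz N => -v) '' Set.range (alphav (N := N)))
    {β : Mz N} (hβ : β ∈ Rp χ) :
    ∃ ψ, Reachable χ ψ ∧ ∃ i : Fin N, χ β β = ψ (alphav i) (alphav i) := by
  by_cases hhit : ∃ t, wtInv χ f t β = alphav (f (t + 1))
  · obtain ⟨t, ht⟩ := hhit
    refine ⟨chif χ f t, chif_reachable χ f t, f (t + 1), ?_⟩
    rw [← ht, ← apply_wt_wt hs, wt_wtInv hs]
  push Not at hhit
  have hmem : ∀ t, wtInv χ f t β ∈ Rp (chif χ f t) := by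
    intro t
    induction t with
    | zero => exact hβ
    | succ t ih =>
      have := hRrefl _ (chif_reachable χ f t) (f (t + 1)) ▸
        Set.mem_image_of_mem (sMap (chif χ f t) (f (t + 1)))
          (show _ ∈ Rp (chif χ f t) \ {alphav (f (t + 1))} from ⟨ih, hhit t⟩)
      exact this.1
  have hnonpos := wt_apply_nonpos hlong (hRsub _ (chif_reachable χ f n) (hmem n)).2
  rw [wt_wtInv hs] at hnonpos
  obtain ⟨hβ0, hβpos⟩ := hRsub χ (Reachable.refl χ) hβ
  exact absurd (Finsupp.ext fun k => le_antisymm (hnonpos k) (hβpos k)) hβ0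

end ReducedWord

lemma qnum_eq_zero_iff {m : ℕ} (hm : 0 < m) (q : ℂ) : qnum m q = 0 ↔ q ≠ 1 ∧ q ^ m = 1 := by
  by_cases hq : q = 1
  · simp [qnum, hq, hm.ne']
  · rw [qnum, geom_sum_eq hq, div_eq_zero_iff, sub_eq_zero, sub_eq_zero]
    tauto

lemma exists_qfact_eq_zero_iff (q : ℂ) :
    (∃ m, qfact m q = 0) ↔ q ≠ 1 ∧ ∃ m, 0 < m ∧ q ^ m = 1 := by
  simp only [qfact, Finset.prod_eq_zero_iff, Finset.mem_range,
    qnum_eq_zero_iff (Nat.succ_pos _)]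
  constructor
  · rintro ⟨_, j, _, hq, hqj⟩
    exact ⟨hq, j + 1, j.succ_pos, hqj⟩
  · rintro ⟨hq, m, hm, hqm⟩
    exact ⟨m, m - 1, by omega, hq, by rwa [Nat.succ_eq_add_one, Nat.sub_add_cancel hm]⟩

lemma hbound_ne_top_iff (q : ℂ) : hbound q ≠ ⊤ ↔ q ≠ 1 ∧ ∃ m, 0 < m ∧ q ^ m = 1 := by
  rw [← exists_qfact_eq_zero_iff, hbound]
  split_ifs with h <;> simpa using h

lemma finite_subtype_le_iff {ι : Type*} [Finite ι] (b : ι → ℕ∞) :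
    Finite {x : ι → ℕ // ∀ y, (x y : ℕ∞) ≤ b y} ↔ ∀ y, b y ≠ ⊤ := by
  classical
  constructor
  · intro hfin y hy
    let g : ℕ → {x : ι → ℕ // ∀ y, (x y : ℕ∞) ≤ b y} := fun n =>
      ⟨Pi.single y n, fun z => by
        rcases eq_or_ne z y with rfl | hz
        · simp [hy]
        · simp [hz]⟩
    have hg : Function.Injective g := fun m n hmn => by
      simpa [g] using congrArg (fun x => x.1 y) hmn
    have := Finite.of_injective g hg
    exact not_finite ℕ
  · intro hb
    choose B hB using fun y => ENat.ne_top_iff_exists.mp (hb y)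
    refine Set.Finite.to_subtype ((Set.Finite.pi fun y => Set.finite_Iic (B y)).subset ?_)
    intro x hx y _
    exact Set.mem_Iic.mpr (by exact_mod_cast hB y ▸ hx y)

theorem finite_dim_iff_roots_of_unity_general {N : ℕ} (χ : Mz N → Mz N → ℂˣ) (hχ : IsBihom χ)
    (Rp : (Mz N → Mz N → ℂˣ) → Set (Mz N))
    (hRsub : ∀ ψ, Reachable χ ψ → Rp ψ ⊆ PosCone N)
    (hRsimple : ∀ ψ, Reachable χ ψ → ∀ i : Fin N, alphav i ∈ Rp ψ)
    (hRrefl : ∀ ψ, Reachable χ ψ → ∀ i : Fin N,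
      sMap ψ i '' (Rp ψ \ {alphav i}) = Rp (starB i ψ) \ {alphav i})
    (hstar : ∀ ψ, Reachable χ ψ → ∀ i : Fin N,
      starB i (starB i ψ) = ψ ∧ sMap (starB i ψ) i = sMap ψ i)
    (hne1 : ∀ ψ, Reachable χ ψ → ∀ i : Fin N, (ψ (alphav i) (alphav i) : ℂ) ≠ 1)
    (f : ℕ → Fin N)
    (hlong : wt χ f (Rp χ).ncard '' Set.range (alphav (N := N)) =
      (fun v : Mz N => -v) '' Set.range (alphav (N := N)))
    (k : ℕ) (ψroot : Fin k → Mz N)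
    (hψrange : Set.range ψroot = Rp χ)
    (V : Type) [AddCommGroup V] [Module ℂ V]
    (bV : Module.Basis {x : Fin k → ℕ //
      ∀ y : Fin k, ((x y : ℕ∞)) ≤ hbound (χ (ψroot y) (ψroot y))} ℂ V) :
    FiniteDimensional ℂ V ↔
      ∀ ψ, Reachable χ ψ → ∀ i : Fin N,
        ∃ m : ℕ, 0 < m ∧ (ψ (alphav i) (alphav i) : ℂ) ^ m = 1 := by
  rw [show FiniteDimensional ℂ V ↔ _ from ⟨fun _ => Module.Finite.finite_basis bV,
    fun _ => Module.Finite.of_basis bV⟩, finite_subtype_le_iff]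
  simp only [hbound_ne_top_iff]
  constructor
  · intro h ψ hψ i
    obtain ⟨γ, hγ, hγi⟩ := hψ.exists_mem_apply_self_eq hχ hRsimple hRrefl (alphav i)
      (hRsimple ψ hψ i)
    obtain ⟨y, rfl⟩ : γ ∈ Set.range ψroot := hψrange ▸ hγ
    exact hγi ▸ (h y).2
  · intro h y
    obtain ⟨ψ, hψ, i, hy⟩ := exists_reachable_apply_self_eq_of_mem hRsub hRrefl
      (sMap_chif_succ χ f hstar) hlong (hψrange ▸ Set.mem_range_self y)
    exact hy ▸ ⟨hne1 ψ hψ i, h ψ hψ i⟩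

/-- Let χ be of finite type, with U⁻(χ) presented by its Kharchenko PBW basis: a basis
indexed by the monomial exponents x with 0 ≤ x_y ≤ h^χ(ψ(y)) over an enumeration ψ of
R⁺(χ). Then dim U⁻(χ) < ∞ if and only if for every χ' ∼ χ (obtained by finitely many
Lusztig twists) and every i, χ'(α_i, α_i) is a root of unity. -/
theorem finite_dim_iff_roots_of_unity {N : ℕ} (χ : Mz N → Mz N → ℂˣ) (hχ : IsBihom χ)
    (Rp : (Mz N → Mz N → ℂˣ) → Set (Mz N))
    (hRfin : (Rp χ).Finite)
    (hRsub : ∀ ψ, Reachable χ ψ → Rp ψ ⊆ PosCone N)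
    (hRsimple : ∀ ψ, Reachable χ ψ → ∀ i : Fin N, alphav i ∈ Rp ψ)
    (hRrefl : ∀ ψ, Reachable χ ψ → ∀ i : Fin N,
      sMap ψ i '' (Rp ψ \ {alphav i}) = Rp (starB i ψ) \ {alphav i})
    (hstar : ∀ ψ, Reachable χ ψ → ∀ i : Fin N,
      starB i (starB i ψ) = ψ ∧ sMap (starB i ψ) i = sMap ψ i)
    (hne1 : ∀ ψ, Reachable χ ψ → ∀ i : Fin N, (ψ (alphav i) (alphav i) : ℂ) ≠ 1)
    (f : ℕ → Fin N)
    (hpos : ∀ y : ℕ, 1 ≤ y → y ≤ (Rp χ).ncard - 1 →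
      wt χ f y (alphav (f (y + 1))) ∈ Rp χ)
    (hlong : wt χ f (Rp χ).ncard '' Set.range (alphav (N := N)) =
      (fun v : Mz N => -v) '' Set.range (alphav (N := N)))
    (k : ℕ) (ψroot : Fin k → Mz N) (hψinj : Function.Injective ψroot)
    (hψrange : Set.range ψroot = Rp χ)
    (V : Type) [AddCommGroup V] [Module ℂ V]
    (bV : Module.Basis {x : Fin k → ℕ //
      ∀ y : Fin k, ((x y : ℕ∞)) ≤ hbound (χ (ψroot y) (ψroot y))} ℂ V) :
    FiniteDimensional ℂ V ↔
      ∀ ψ, Reachable χ ψ → ∀ i : Fin N,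
        ∃ m : ℕ, 0 < m ∧ (ψ (alphav i) (alphav i) : ℂ) ^ m = 1 :=
  finite_dim_iff_roots_of_unity_general χ hχ Rp hRsub hRsimple hRrefl hstar hne1 f hlong k ψroot
    hψrange V bV
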